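/- Let K be a field of characteristic p = 7ℓ+3 and let a₀,...,a_{2ℓ} ∈ K be the unique solution of A·(a₀,...,a_{2ℓ})ᵀ = e_{ℓ+1}, where A is the invertible (2ℓ+1)×(2ℓ+1) matrix with entries C(4ℓ+2, 2ℓ+1+i-j) and e_{ℓ+1} is the (ℓ+1)-th standard basis vector. Then in K[x,y], the polynomial f = (Σ_{i=0}^{2ℓ} a_i x^{7i} y^{7(2ℓ-i)})·(x^7+y^7)^{4ℓ+2} is congruent to x^{7(3ℓ+1)} y^{7(3ℓ+1)} modulo the ideal (x^{28ℓ+12}, y^{28ℓ+12}). -/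

import Mathlib

/-!
With `u = x^7` and `v = y^7` the product is a binary form of degree `6ℓ+2` in `u, v`. Its
coefficient at `u^s v^(6ℓ+2-s)` is `∑ⱼ C(4ℓ+2, s-j) aⱼ`; for the `2ℓ+1` values `2ℓ < s < 4ℓ+2`
these are exactly the entries of `A·a = e_{ℓ+1}`, and every other monomial has `u`- or
`v`-degree at least `4ℓ+2`, i.e. `x`- or `y`-degree at least `28ℓ+14`, so it lies in the ideal.
-/

open MvPolynomial

/-- Binomial coefficient with integer lower index, zero when the index is negative. -/
def ch (n : ℕ) (k : ℤ) : ℤ := if 0 ≤ k then n.choose k.toNat else 0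

theorem ch_natCast (n k : ℕ) : ch n k = n.choose k := by
  simp [ch]

theorem ch_of_neg (n : ℕ) {k : ℤ} (hk : k < 0) : ch n k = 0 := by
  simp [ch, hk.not_ge]

section BinaryForms

variable {R : Type*} [CommRing R]

theorem sum_ch_mul_pow_mul_pow (u v : R) {n : ℕ} (N : ℕ) {i : ℕ} (hi : i ≤ n) :
    ∑ s ∈ Finset.range (n + N + 1), (ch N ((s : ℤ) - i) : R) * u ^ s * v ^ (n + N - s) =
      u ^ i * v ^ (n - i) * (u + v) ^ N := by
  have hsplit : n + N + 1 = i + ((N + 1) + (n - i)) := by omega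
  have hbelow : ∀ s ∈ Finset.range i,
      (ch N ((s : ℤ) - i) : R) * u ^ s * v ^ (n + N - s) = 0 := fun s hs => by
    rw [ch_of_neg N (by simp at hs; omega)]; simp
  have habove : ∀ k ∈ Finset.range (n - i),
      (ch N (((i + (N + 1 + k) : ℕ) : ℤ) - i) : R) * u ^ (i + (N + 1 + k)) *
        v ^ (n + N - (i + (N + 1 + k))) = 0 := fun k _ => by
    rw [show ((i + (N + 1 + k) : ℕ) : ℤ) - i = ((N + 1 + k : ℕ) : ℤ) by push_cast; ring,
      ch_natCast, Nat.choose_eq_zero_of_lt (by omega)]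
    simp
  rw [hsplit, Finset.sum_range_add, Finset.sum_eq_zero hbelow, zero_add, Finset.sum_range_add,
    Finset.sum_eq_zero habove, add_zero, add_pow, Finset.mul_sum]
  refine Finset.sum_congr rfl fun k hk => ?_
  have hk : k ≤ N := by simp at hk; omega
  rw [show ((i + k : ℕ) : ℤ) - i = k by push_cast; ring, ch_natCast,
    show n + N - (i + k) = (n - i) + (N - k) by omega]
  push_cast
  ring

theorem sum_mul_pow_mul_pow_mul_add_pow (u v : R) (n N : ℕ) (a : Fin (n + 1) → R) :
    (∑ i, a i * u ^ (i : ℕ) * v ^ (n - i)) * (u + v) ^ N =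
      ∑ s ∈ Finset.range (n + N + 1),
        (∑ i : Fin (n + 1), (ch N ((s : ℤ) - (i : ℕ)) : R) * a i) * u ^ s * v ^ (n + N - s) := by
  simp_rw [Finset.sum_mul, Finset.sum_comm (s := Finset.range _)]
  refine Finset.sum_congr rfl fun i _ => ?_
  rw [mul_assoc, mul_assoc, ← mul_assoc (u ^ _),
    ← sum_ch_mul_pow_mul_pow u v N (Nat.lt_succ_iff.mp i.isLt), Finset.mul_sum]
  exact Finset.sum_congr rfl fun s _ => by ring

theorem sum_mul_pow_mul_pow_sub_mem {I : Ideal R} {u v : R} {M D t : ℕ} (hu : u ^ M ∈ I)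
    (hv : v ^ M ∈ I) (ht : t ≤ D) (c : ℕ → R)
    (hc : ∀ s ≤ D, s < M → D - s < M → c s = if s = t then 1 else 0) :
    ∑ s ∈ Finset.range (D + 1), c s * u ^ s * v ^ (D - s) - u ^ t * v ^ (D - t) ∈ I := by
  have hmono : u ^ t * v ^ (D - t) =
      ∑ s ∈ Finset.range (D + 1), (if s = t then 1 else 0) * u ^ s * v ^ (D - s) := by
    simp [Finset.mem_range.mpr (Nat.lt_succ_of_le ht)]
  rw [hmono, ← Finset.sum_sub_distrib]
  refine Ideal.sum_mem _ fun s hs => ?_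
  have hs : s ≤ D := Nat.lt_succ_iff.mp (Finset.mem_range.mp hs)
  rw [← sub_mul, ← sub_mul]
  by_cases hsu : s < M
  · by_cases hsv : D - s < M
    · simp [hc s hs hsu hsv]
    · exact I.mul_mem_left _ (I.pow_mem_of_pow_mem hv (by omega))
  · exact I.mul_mem_right _ (I.mul_mem_left _ (I.pow_mem_of_pow_mem hu (by omega)))

end BinaryForms

theorem congruence_3mod7 {K : Type*} [Field K] (ℓ : ℕ) (a : Fin (2 * ℓ + 1) → K)
    (ha : (Matrix.of fun i j : Fin (2 * ℓ + 1) =>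
        ((ch (4 * ℓ + 2) ((2 * ℓ + 1 + (i : ℕ) : ℤ) - (j : ℕ)) : ℤ) : K)).mulVec a =
      Pi.single (⟨ℓ, by omega⟩ : Fin (2 * ℓ + 1)) 1) :
    (∑ i : Fin (2 * ℓ + 1), C (a i) * (X 0 : MvPolynomial (Fin 2) K) ^ (7 * (i : ℕ)) *
          X 1 ^ (7 * (2 * ℓ - (i : ℕ)))) * (X 0 ^ 7 + X 1 ^ 7) ^ (4 * ℓ + 2) -
        X 0 ^ (7 * (3 * ℓ + 1)) * X 1 ^ (7 * (3 * ℓ + 1)) ∈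
      Ideal.span {(X 0 : MvPolynomial (Fin 2) K) ^ (28 * ℓ + 12), X 1 ^ (28 * ℓ + 12)} := by
  have hcoeff : ∀ m < 2 * ℓ + 1, ∑ j : Fin (2 * ℓ + 1),
      (ch (4 * ℓ + 2) (((2 * ℓ + 1 + m : ℕ) : ℤ) - (j : ℕ)) : K) * a j =
        if m = ℓ then 1 else 0 := fun m hm => by
    simpa [Matrix.mulVec, dotProduct, Pi.single_apply, Fin.ext_iff] using congrFun ha ⟨m, hm⟩
  simp only [pow_mul]
  rw [sum_mul_pow_mul_pow_mul_add_pow,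
    show (X 1 ^ 7 : MvPolynomial (Fin 2) K) ^ (3 * ℓ + 1) =
      (X 1 ^ 7) ^ (2 * ℓ + (4 * ℓ + 2) - (3 * ℓ + 1)) by congr 1; omega]
  refine sum_mul_pow_mul_pow_sub_mem (M := 4 * ℓ + 2) ?_ ?_ (by omega) _ fun s _ hsu hsv => ?_
  · rw [← pow_mul]
    exact Ideal.pow_mem_of_pow_mem _ (m := 28 * ℓ + 12) (Ideal.subset_span (by simp)) (by omega)
  · rw [← pow_mul]
    exact Ideal.pow_mem_of_pow_mem _ (m := 28 * ℓ + 12) (Ideal.subset_span (by simp)) (by omega)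
  · obtain ⟨m, rfl⟩ : ∃ m, s = 2 * ℓ + 1 + m := ⟨s - (2 * ℓ + 1), by omega⟩
    have hcoeffC := congrArg (C (σ := Fin 2)) (hcoeff m (by omega))
    simp only [map_sum, map_mul, map_intCast, apply_ite C, map_one, map_zero] at hcoeffC
    rw [hcoeffC]
    exact if_congr (by omega) rfl rfl
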